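/- If φ: ℝ^d → ℝ is differentiable and absolutely convex and φ(0) = 0, then φ(x) = ⟨∇φ(x), x⟩ for every x, and φ is positively homogeneous of degree 1: φ(tx) = tφ(x) for all t ≥ 0 and x ∈ ℝ^d. -/

import Mathlib

open scoped RealInnerProductSpace

/-- `φ` is absolutely convex: `φ(x) ≥ |φ(y) + ⟨∇φ(y), x−y⟩|` for all `x, y`. -/
def AbsolutelyConvex {d : ℕ} (φ : EuclideanSpace ℝ (Fin d) → ℝ) : Prop :=
  ∀ x y, |φ y + ⟪gradient φ y, x - y⟫| ≤ φ x

theorem stmt_14 {d : ℕ} (φ : EuclideanSpace ℝ (Fin d) → ℝ)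
    (hφ : Differentiable ℝ φ) (habs : AbsolutelyConvex φ) (h0 : φ 0 = 0) :
    (∀ x, φ x = ⟪gradient φ x, x⟫) ∧
      (∀ t : ℝ, 0 ≤ t → ∀ x, φ (t • x) = t * φ x) := by
  have h1 : ∀ x, φ x = ⟪gradient φ x, x⟫ := by
    intro x
    have := habs 0 x
    rw [h0, zero_sub, inner_neg_right] at this
    have h2 : |φ x - ⟪gradient φ x, x⟫| ≤ 0 := by rw [← sub_eq_add_neg] at this; exact this
    exact sub_eq_zero.mp (abs_nonpos_iff.mp h2)
  refine ⟨h1, fun t ht x => ?_⟩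
  -- derivative of f s := φ (s • x)
  set f : ℝ → ℝ := fun s => φ (s • x) with hf
  have hder : ∀ s : ℝ, HasDerivAt f ⟪gradient φ (s • x), x⟫ s := by
    intro s
    have hg : HasFDerivAt φ ((InnerProductSpace.toDual ℝ _) (gradient φ (s • x))) (s • x) :=
      ((hφ (s • x)).hasGradientAt).hasFDerivAt
    have hsmul : HasDerivAt (fun u : ℝ => u • x) x s := by
      simpa using (hasDerivAt_id s).smul_const x
    have := hg.comp_hasDerivAt s hsmul
    simp [InnerProductSpace.toDual_apply_apply] at this ⊢; exact this
  have key : ∀ s : ℝ, f s = s * ⟪gradient φ (s • x), x⟫ := by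
    intro s
    have := h1 (s • x)
    rw [real_inner_smul_right] at this
    simpa [hf] using this
  rcases eq_or_lt_of_le ht with rfl | htpos
  · simp [hf, h0]
  · -- constancy of f s / s on Ioi 0
    set q : ℝ → ℝ := fun s => f s / s with hq
    have hqderiv : ∀ s ∈ Set.Ioi (0:ℝ), HasDerivAt q 0 s := by
      intro s hs
      have hs0 : s ≠ 0 := ne_of_gt hs
      have h' := (hder s).div (hasDerivAt_id s) hs0
      have : HasDerivAt q 0 s := by
        convert h' using 1
        · rfl
        · rfl
        · rfl
        simp only [id_eq]; rw [key s]; ring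
      exact this
    have hconst : ∀ s ∈ Set.Ioi (0:ℝ), q s = q 1 := by
      intro s hs
      have := (convex_Ioi (0:ℝ)).is_const_of_fderivWithin_eq_zero
        (f := q) (fun z hz => ((hqderiv z hz).differentiableAt).differentiableWithinAt)
        (fun z hz => by
          rw [fderivWithin_of_isOpen isOpen_Ioi hz, (hqderiv z hz).hasFDerivAt.fderiv]
          ext; simp)
        hs (by norm_num : (1:ℝ) ∈ Set.Ioi (0:ℝ))
      exact this
    have := hconst t htpos
    have h1q : q 1 = φ x := by simp [hq, hf]
    rw [h1q] at this
    have : f t = t * φ x := by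
      rw [hq] at this
      field_simp [hq, ne_of_gt htpos] at this
      linarith [this]
    simpa [hf] using this
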